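/- Let G be a P4-reducible graph, i.e., a graph that is both P4-sparse and P4-extendible. Then G is L-integral if and only if G is a cograph. -/

import Mathlib

open SimpleGraph Polynomial

/-- A finite simple graph is `L`-integral if every eigenvalue of its Laplacian
matrix (over `ℝ`) is an integer. -/
def LIntegral {V : Type*} [Fintype V] [DecidableEq V] (G : SimpleGraph V)
    [DecidableRel G.Adj] : Prop :=
  ∀ μ ∈ spectrum ℝ (G.lapMatrix ℝ), ∃ z : ℤ, μ = (z : ℝ)

/-- The finite vertex set `W` induces a path `P₄` in `G`. -/
def InducesP4 {V : Type*} (G : SimpleGraph V) (W : Finset V) : Prop :=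
  Nonempty (G.induce (W : Set V) ≃g SimpleGraph.pathGraph 4)

/-- A graph is `P₄`-sparse if every set of five vertices contains at most one
4-element subset inducing a path `P₄`. -/
def P4Sparse {V : Type*} (G : SimpleGraph V) : Prop :=
  ∀ s : Finset V, s.card = 5 →
    {W : Finset V | W ⊆ s ∧ W.card = 4 ∧ InducesP4 G W}.Subsingleton

/-- A graph is `P₄`-extendible if for every vertex subset `W` inducing a path `P₄`
there is at most one vertex `x ∉ W` that induces a `P₄` together with some three
vertices of `W`. -/
def P4Extendible {V : Type*} [DecidableEq V] (G : SimpleGraph V) : Prop :=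
  ∀ W : Finset V, InducesP4 G W →
    {x : V | x ∉ W ∧ ∃ T : Finset V, T ⊆ W ∧ T.card = 3 ∧
      InducesP4 G (insert x T)}.Subsingleton

/-- A cograph is a graph with no induced subgraph isomorphic to the path `P₄`. -/
def IsCograph {V : Type*} (G : SimpleGraph V) : Prop :=
  ∀ s : Set V, ¬ Nonempty (G.induce s ≃g SimpleGraph.pathGraph 4)

open Matrix Module.End Finset

section Aux


def P4pat {V : Type*} (G : SimpleGraph V) (a b c d : V) : Prop :=
  a ≠ c ∧ a ≠ d ∧ b ≠ d ∧ G.Adj a b ∧ G.Adj b c ∧ G.Adj c d ∧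
    ¬G.Adj a c ∧ ¬G.Adj a d ∧ ¬G.Adj b d

def NoP4 {V : Type*} (G : SimpleGraph V) : Prop := ∀ a b c d : V, ¬ P4pat G a b c d

/-- a good split: either no edges or all edges across -/

def GoodSplit {V : Type*} (G : SimpleGraph V) : Prop :=
  ∃ S : Set V, S.Nonempty ∧ Sᶜ.Nonempty ∧
    ((∀ i ∈ S, ∀ j ∈ Sᶜ, ¬ G.Adj i j) ∨ (∀ i ∈ S, ∀ j ∈ Sᶜ, G.Adj i j))

instance induceAdjDecidable {V : Type*} [DecidableEq V] (G : SimpleGraph V) [DecidableRel G.Adj] (S : Set V) :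
    DecidableRel (G.induce S).Adj := fun a b => (inferInstance : Decidable (G.Adj a b))

lemma mem_spectrum_iff_exists {V : Type*} [Fintype V] [DecidableEq V] {M : Matrix V V ℝ} {μ : ℝ} :
    μ ∈ spectrum ℝ M ↔ ∃ v : V → ℝ, v ≠ 0 ∧ M *ᵥ v = μ • v := by
  rw [← AlgEquiv.spectrum_eq (Matrix.toLinAlgEquiv' : Matrix V V ℝ ≃ₐ[ℝ] _) M,
    ← Module.End.hasEigenvalue_iff_mem_spectrum, Module.End.hasEigenvalue_iff,
    Submodule.ne_bot_iff]
  constructor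
  · rintro ⟨v, hv, hv0⟩
    exact ⟨v, hv0, by simpa [Matrix.toLinAlgEquiv'_apply, mem_eigenspace_iff] using hv⟩
  · rintro ⟨v, hv0, hv⟩
    exact ⟨v, by simpa [Matrix.toLinAlgEquiv'_apply, mem_eigenspace_iff] using hv, hv0⟩

lemma lap_mulVec {V : Type*} [Fintype V] [DecidableEq V] (G : SimpleGraph V) [DecidableRel G.Adj] (f : V → ℝ) (i : V) :
    (G.lapMatrix ℝ *ᵥ f) i = ∑ j, (if G.Adj i j then f i - f j else 0) := by
  rw [SimpleGraph.lapMatrix_mulVec_apply]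
  have h1 : ∑ u ∈ G.neighborFinset i, f u = ∑ j, if G.Adj i j then f j else 0 := by
    rw [SimpleGraph.neighborFinset_eq_filter, Finset.sum_filter]
  have h2 : (G.degree i : ℝ) * f i = ∑ j, if G.Adj i j then f i else 0 := by
    rw [SimpleGraph.degree, SimpleGraph.neighborFinset_eq_filter, Finset.sum_ite, Finset.sum_const,
      Finset.sum_const_zero, add_zero, nsmul_eq_mul]
  rw [h1, h2, ← Finset.sum_sub_distrib]
  apply Finset.sum_congr rfl
  intro j _
  split_ifs <;> ring

lemma eigen_sum_zero {V : Type*} [Fintype V] [DecidableEq V] (G : SimpleGraph V) [DecidableRel G.Adj] {f : V → ℝ} {μ : ℝ}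
    (hf : G.lapMatrix ℝ *ᵥ f = μ • f) (h0 : μ ≠ 0) : ∑ j, f j = 0 := by
  have key : ∀ i j : V, (if G.Adj j i then f j - f i else 0)
      = -(if G.Adj i j then f i - f j else 0) := by
    intro i j
    by_cases h : G.Adj i j
    · simp only [h, h.symm, if_true]; ring
    · have h' : ¬ G.Adj j i := fun hh => h hh.symm
      simp [h, h']
  have hS : ∑ i, ∑ j, (if G.Adj i j then f i - f j else 0) = 0 := by
    have h3 : ∑ i, ∑ j, (if G.Adj i j then f i - f j else 0)
        = -∑ i, ∑ j, (if G.Adj i j then f i - f j else 0) := by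
      calc ∑ i, ∑ j, (if G.Adj i j then f i - f j else 0)
          = ∑ j, ∑ i, (if G.Adj i j then f i - f j else 0) := Finset.sum_comm
        _ = ∑ j, ∑ i, -(if G.Adj j i then f j - f i else 0) := by
            apply Finset.sum_congr rfl; intro j _
            apply Finset.sum_congr rfl; intro i _
            rw [key i j, neg_neg]
        _ = -∑ i, ∑ j, (if G.Adj i j then f i - f j else 0) := by
            simp [← Finset.sum_neg_distrib]
    linarith
  have h5 : ∑ i, (G.lapMatrix ℝ *ᵥ f) i = μ * ∑ j, f j := by
    rw [hf]; simp [Finset.mul_sum]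
  have h6 : ∑ i, (G.lapMatrix ℝ *ᵥ f) i = 0 := by
    simp_rw [lap_mulVec]; exact hS
  have := h6.symm.trans h5
  field_simp at this
  exact (mul_eq_zero.mp this.symm).resolve_left h0

lemma compl_spectrum {V : Type*} [Fintype V] [DecidableEq V] (G : SimpleGraph V) [DecidableRel G.Adj] {μ : ℝ} {f : V → ℝ}
    (hf : G.lapMatrix ℝ *ᵥ f = μ • f) (hf0 : f ≠ 0) (h0 : μ ≠ 0) :
    ((Fintype.card V : ℝ) - μ) ∈ spectrum ℝ (Gᶜ.lapMatrix ℝ) := by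
  have hsum := eigen_sum_zero G hf h0
  rw [mem_spectrum_iff_exists]
  refine ⟨f, hf0, ?_⟩
  funext i
  rw [lap_mulVec]
  have hptwise : ∀ j : V, (if Gᶜ.Adj i j then f i - f j else 0)
      = (f i - f j) - (if G.Adj i j then f i - f j else 0) := by
    intro j
    by_cases hij : i = j
    · subst hij; simp [G.irrefl]
    · by_cases ha : G.Adj i j
      · have : ¬ Gᶜ.Adj i j := by
          intro hc
          exact ((SimpleGraph.compl_adj G i j).mp hc).2 ha
        simp [this, ha]
      · have : Gᶜ.Adj i j := (SimpleGraph.compl_adj G i j).mpr ⟨hij, ha⟩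
        simp [this, ha]
  simp_rw [hptwise]
  rw [Finset.sum_sub_distrib, Finset.sum_sub_distrib, Finset.sum_const, hsum,
    ← lap_mulVec, hf]
  simp [Finset.card_univ, sub_mul, mul_comm]
  ring

lemma spectrum_induce {V : Type*} [Fintype V] [DecidableEq V] (G : SimpleGraph V) [DecidableRel G.Adj] (S : Set V)
    [DecidablePred (· ∈ S)]
    (hcross : ∀ i ∈ S, ∀ j ∉ S, ¬ G.Adj i j) {μ : ℝ} {f : V → ℝ}
    (hf : G.lapMatrix ℝ *ᵥ f = μ • f) {i : V} (hi : i ∈ S) (hfi : f i ≠ 0) :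
    μ ∈ spectrum ℝ ((G.induce S).lapMatrix ℝ) := by
  rw [mem_spectrum_iff_exists]
  refine ⟨fun x => f x.1, fun h => hfi (congrFun h ⟨i, hi⟩), ?_⟩
  funext x
  rw [lap_mulVec]
  have hx : (x : V) ∈ S := x.2
  have step1 : ∑ y : S, (if (G.induce S).Adj x y then f x.1 - f y.1 else 0)
      = ∑ j ∈ Finset.univ.filter (· ∈ S), (if G.Adj x.1 j then f x.1 - f j else 0) := by
    have conv1 : ∑ y : S, (if (G.induce S).Adj x y then f x.1 - f y.1 else 0)
        = ∑ y : S, (fun j => if G.Adj x.1 j then f x.1 - f j else 0) y.1 := rfl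
    rw [conv1]
    exact (Finset.sum_subtype (Finset.univ.filter (· ∈ S)) (by intro y; simp)
      (fun j => if G.Adj x.1 j then f x.1 - f j else 0)).symm
  have step2 : ∑ j ∈ Finset.univ.filter (· ∈ S), (if G.Adj x.1 j then f x.1 - f j else 0)
      = ∑ j, (if G.Adj x.1 j then f x.1 - f j else 0) := by
    apply Finset.sum_subset (Finset.filter_subset _ _)
    intro j _ hj
    simp only [Finset.mem_filter, Finset.mem_univ, true_and] at hj
    rw [if_neg (hcross x.1 hx j hj)]
  have := congrFun hf x.1
  rw [lap_mulVec] at this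
  rw [step1, step2, this]
  rfl

lemma exists_pat_of_iso {V : Type*} {G : SimpleGraph V} {s : Set V}
    (h : Nonempty (G.induce s ≃g SimpleGraph.pathGraph 4)) :
    ∃ a b c d, P4pat G a b c d := by
  obtain ⟨φ⟩ := h
  let ψ := φ.symm
  have hadj : ∀ i j : Fin 4, G.Adj (ψ i).1 (ψ j).1 ↔ (SimpleGraph.pathGraph 4).Adj i j :=
    fun i j => ψ.map_rel_iff
  have hne : ∀ i j : Fin 4, i ≠ j → (ψ i).1 ≠ (ψ j).1 := by
    intro i j hij hval
    exact hij (ψ.injective (Subtype.ext hval))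
  have hp : ∀ i j : Fin 4, ((SimpleGraph.pathGraph 4).Adj i j ↔ (i.1 + 1 = j.1 ∨ j.1 + 1 = i.1)) :=
    fun i j => SimpleGraph.pathGraph_adj
  refine ⟨(ψ 0).1, (ψ 1).1, (ψ 2).1, (ψ 3).1, hne 0 2 (by decide), hne 0 3 (by decide),
    hne 1 3 (by decide), (hadj 0 1).mpr ((hp 0 1).mpr (by decide)),
    (hadj 1 2).mpr ((hp 1 2).mpr (by decide)), (hadj 2 3).mpr ((hp 2 3).mpr (by decide)),
    fun hc => (by decide : ¬(((0:Fin 4).1 + 1 = (2:Fin 4).1) ∨ ((2:Fin 4).1 + 1 = (0:Fin 4).1)))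
      ((hp 0 2).mp ((hadj 0 2).mp hc)), ?_, ?_⟩
  · exact fun hc => (by decide : ¬(((0:Fin 4).1 + 1 = (3:Fin 4).1) ∨ ((3:Fin 4).1 + 1 = (0:Fin 4).1)))
      ((hp 0 3).mp ((hadj 0 3).mp hc))
  · exact fun hc => (by decide : ¬(((1:Fin 4).1 + 1 = (3:Fin 4).1) ∨ ((3:Fin 4).1 + 1 = (1:Fin 4).1)))
      ((hp 1 3).mp ((hadj 1 3).mp hc))

lemma iso_of_pat {V : Type*} {G : SimpleGraph V} {a b c d : V} (h : P4pat G a b c d) :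
    Nonempty (G.induce ({a, b, c, d} : Set V) ≃g SimpleGraph.pathGraph 4) := by
  classical
  obtain ⟨hac, had, hbd, hab, hbc, hcd, nac, nad, nbd⟩ := h
  have hab' : a ≠ b := hab.ne
  have hbc' : b ≠ c := hbc.ne
  have hcd' : c ≠ d := hcd.ne
  set s : Set V := {a, b, c, d} with hs
  have ha : a ∈ s := by simp [hs]
  have hb : b ∈ s := by simp [hs]
  have hc : c ∈ s := by simp [hs]
  have hd : d ∈ s := by simp [hs]
  let e : Fin 4 → ↥s := ![⟨a, ha⟩, ⟨b, hb⟩, ⟨c, hc⟩, ⟨d, hd⟩]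
  have hbij : Function.Bijective e := by
    constructor
    · intro i j hij
      fin_cases i <;> fin_cases j <;> simp_all [e, Subtype.ext_iff] <;>
        first | rfl | exact absurd hij (by tauto)
    · rintro ⟨x, hx⟩
      rcases hx with rfl | rfl | rfl | rfl
      · exact ⟨0, rfl⟩
      · exact ⟨1, rfl⟩
      · exact ⟨2, rfl⟩
      · exact ⟨3, rfl⟩
  have hmap : ∀ i j : Fin 4, (G.induce s).Adj (e i) (e j) ↔ (SimpleGraph.pathGraph 4).Adj i j := by
    intro i j
    have hp : ((SimpleGraph.pathGraph 4).Adj i j ↔ (i.1 + 1 = j.1 ∨ j.1 + 1 = i.1)) :=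
      SimpleGraph.pathGraph_adj
    rw [hp]
    have nca : ¬G.Adj c a := fun h => nac h.symm
    have nda : ¬G.Adj d a := fun h => nad h.symm
    have ndb : ¬G.Adj d b := fun h => nbd h.symm
    have hba : G.Adj b a := hab.symm
    have hcb : G.Adj c b := hbc.symm
    have hdc : G.Adj d c := hcd.symm
    fin_cases i <;> fin_cases j <;>
      simp [e, hab, hbc, hcd, hba, hcb, hdc, nac, nad, nbd, nca, nda, ndb, G.irrefl]
  exact ⟨(RelIso.mk (Equiv.ofBijective e hbij) (by intro i j; exact hmap i j)).symm⟩

lemma claimC {V : Type*} {G : SimpleGraph V} (hG : NoP4 G) (v : V) (S T : Set V)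
    (hS : S.Nonempty) (hT : T.Nonempty) (hvS : v ∉ S) (hvT : v ∉ T)
    (hdisj : ∀ x, x ∈ S → x ∉ T)
    (hcover : ∀ x : V, x = v ∨ x ∈ S ∨ x ∈ T)
    (hST : ∀ i ∈ S, ∀ j ∈ T, ¬ G.Adj i j) : GoodSplit G := by
  have hTS : ∀ i ∈ T, ∀ j ∈ S, ¬ G.Adj i j := fun i hi j hj h => hST j hj i hi h.symm
  by_cases hSN : ∃ s ∈ S, G.Adj v s
  · by_cases hTN : ∃ t ∈ T, G.Adj v t
    · by_cases hA : ∃ a ∈ S, ¬ G.Adj v a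
      · -- split A = S \ N(v)
        obtain ⟨a0, ha0S, ha0⟩ := hA
        obtain ⟨t, htT, htv⟩ := hTN
        refine ⟨{x | x ∈ S ∧ ¬ G.Adj v x}, ⟨a0, ha0S, ha0⟩, ⟨v, by simp [hvS]⟩, Or.inl ?_⟩
        rintro i ⟨hiS, hiv⟩ j hj hadj
        rcases hcover j with rfl | hjS | hjT
        · exact hiv hadj.symm
        · -- j ∈ S, adjacent to v (else j would be in the split set)
          have hjv : G.Adj v j := by
            by_contra hjv
            exact hj ⟨hjS, hjv⟩
          -- P4 : i - j - v - t
          exact hG i j v t ⟨fun h => hvS (h ▸ hiS), fun h => (hdisj i hiS) (h ▸ htT),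
            fun h => (hdisj j hjS) (h ▸ htT), hadj, hjv.symm, htv,
            fun h => hiv h.symm, fun h => hST i hiS t htT h, fun h => hST j hjS t htT h⟩
        · exact hST i hiS j hjT hadj
      · by_cases hB : ∃ b ∈ T, ¬ G.Adj v b
        · obtain ⟨b0, hb0T, hb0⟩ := hB
          obtain ⟨s, hsS, hsv⟩ := hSN
          refine ⟨{x | x ∈ T ∧ ¬ G.Adj v x}, ⟨b0, hb0T, hb0⟩, ⟨v, by simp [hvT]⟩, Or.inl ?_⟩
          rintro i ⟨hiT, hiv⟩ j hj hadj
          rcases hcover j with rfl | hjS | hjT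
          · exact hiv hadj.symm
          · exact hTS i hiT j hjS hadj
          · have hjv : G.Adj v j := by
              by_contra hjv
              exact hj ⟨hjT, hjv⟩
            exact hG i j v s ⟨fun h => hvT (h ▸ hiT), fun h => (hdisj s hsS) (h ▸ hiT),
              fun h => (hdisj s hsS) (h ▸ hjT), hadj, hjv.symm, hsv,
              fun h => hiv h.symm, fun h => hTS i hiT s hsS h, fun h => hTS j hjT s hsS h⟩
        · -- v adjacent to everything
          push_neg at hA hB
          refine ⟨{v}, ⟨v, rfl⟩, ?_, Or.inr ?_⟩
          · obtain ⟨s, hsS⟩ := hS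
            exact ⟨s, fun h => hvS (Set.mem_singleton_iff.mp h ▸ hsS)⟩
          · rintro i rfl j hj
            rcases hcover j with rfl | hjS | hjT
            · exact absurd rfl hj
            · exact hA j hjS
            · exact hB j hjT
    · -- no edges v-T : split T
      push_neg at hTN
      refine ⟨T, hT, ⟨v, hvT⟩, Or.inl ?_⟩
      intro i hiT j hj hadj
      rcases hcover j with rfl | hjS | hjT
      · exact hTN i hiT hadj.symm
      · exact hTS i hiT j hjS hadj
      · exact hj hjT
  · push_neg at hSN
    refine ⟨S, hS, ⟨v, hvS⟩, Or.inl ?_⟩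
    intro i hiS j hj hadj
    rcases hcover j with rfl | hjS | hjT
    · exact hSN i hiS hadj.symm
    · exact hj hjS
    · exact hST i hiS j hjT hadj

lemma noP4_compl {V : Type*} {G : SimpleGraph V} (h : NoP4 G) : NoP4 Gᶜ := by
  rintro a b c d ⟨hac, had, hbd, hab, hbc, hcd, nac, nad, nbd⟩
  have gac : G.Adj a c := by
    by_contra hc; exact nac ((SimpleGraph.compl_adj G a c).mpr ⟨hac, hc⟩)
  have gad : G.Adj a d := by
    by_contra hc; exact nad ((SimpleGraph.compl_adj G a d).mpr ⟨had, hc⟩)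
  have gbd : G.Adj b d := by
    by_contra hc; exact nbd ((SimpleGraph.compl_adj G b d).mpr ⟨hbd, hc⟩)
  have nab : ¬G.Adj a b := ((SimpleGraph.compl_adj G a b).mp hab).2
  have nbc : ¬G.Adj b c := ((SimpleGraph.compl_adj G b c).mp hbc).2
  have ncd : ¬G.Adj c d := ((SimpleGraph.compl_adj G c d).mp hcd).2
  exact h b d a c ⟨fun hh => hab.ne hh.symm, hbc.ne,
    fun hh => hcd.ne hh.symm, gbd, gad.symm, gac,
    fun hh => nab hh.symm, fun hh => nbc hh, fun hh => ncd hh.symm⟩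

lemma noP4_induce {V : Type*} {G : SimpleGraph V} (h : NoP4 G) (S : Set V) : NoP4 (G.induce S) := by
  rintro a b c d ⟨hac, had, hbd, hab, hbc, hcd, nac, nad, nbd⟩
  exact h a.1 b.1 c.1 d.1 ⟨fun hh => hac (Subtype.ext hh), fun hh => had (Subtype.ext hh),
    fun hh => hbd (Subtype.ext hh), hab, hbc, hcd, nac, nad, nbd⟩

lemma goodSplit_compl {V : Type*} {G : SimpleGraph V} (h : GoodSplit Gᶜ) : GoodSplit G := by
  obtain ⟨S, hS, hSc, hsplit | hsplit⟩ := h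
  · refine ⟨S, hS, hSc, Or.inr ?_⟩
    intro i hi j hj
    by_contra hadj
    exact hsplit i hi j hj ((SimpleGraph.compl_adj G i j).mpr ⟨fun hh => hj (hh ▸ hi), hadj⟩)
  · refine ⟨S, hS, hSc, Or.inl ?_⟩
    intro i hi j hj hadj
    exact ((SimpleGraph.compl_adj G i j).mp (hsplit i hi j hj)).2 hadj

lemma goodSplit_of_noP4 : ∀ n : ℕ, ∀ (V : Type*) (_ : Fintype V) (_ : DecidableEq V)
    (G : SimpleGraph V), Fintype.card V = n → 2 ≤ n → NoP4 G → GoodSplit G := by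
  intro n
  induction n using Nat.strong_induction_on with
  | _ n IH =>
    intro V _ _ G hcard h2 hG
    have hne : Nonempty V := by
      rw [← Fintype.card_pos_iff, hcard]; omega
    obtain ⟨v⟩ := hne
    set U : Set V := {x | x ≠ v} with hU
    have hUcard : Fintype.card ↥U = n - 1 := by
      have : Fintype.card ↥U = Fintype.card V - 1 := by
        simp [hU, Fintype.card_subtype_compl, Finset.filter_ne']
      omega
    rcases Nat.lt_or_ge n 3 with h3 | h3
    · -- n = 2
      have hn2 : n = 2 := by omega
      have hU1 : Fintype.card ↥U = 1 := by omega
      obtain ⟨u, hu⟩ := Fintype.card_eq_one_iff.mp hU1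
      have huv : (u : V) ≠ v := u.2
      have honly : ∀ j : V, j ≠ v → j = u.1 := by
        intro j hj
        have := hu ⟨j, hj⟩
        exact congrArg Subtype.val this
      by_cases hadj : G.Adj v u.1
      · refine ⟨{v}, ⟨v, rfl⟩, ⟨u.1, fun h => huv (Set.mem_singleton_iff.mp h)⟩, Or.inr ?_⟩
        rintro i rfl j hj
        have : j = u.1 := honly j (fun h => hj (h ▸ rfl))
        exact this ▸ hadj
      · refine ⟨{v}, ⟨v, rfl⟩, ⟨u.1, fun h => huv (Set.mem_singleton_iff.mp h)⟩, Or.inl ?_⟩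
        rintro i rfl j hj hadj'
        have : j = u.1 := honly j (fun h => hj (h ▸ rfl))
        exact hadj (this ▸ hadj')
    · -- n ≥ 3
      have hU2 : 2 ≤ Fintype.card ↥U := by omega
      have hsplit' : GoodSplit (G.induce U) :=
        IH (n-1) (by omega) ↥U _ (Subtype.instDecidableEq) (G.induce U) hUcard (by omega) (noP4_induce hG U)
      obtain ⟨S₀, hS₀, hS₀c, hcase⟩ := hsplit'
      set S : Set V := Subtype.val '' S₀ with hSdef
      set T : Set V := Subtype.val '' S₀ᶜ with hTdef
      have hSne : S.Nonempty := hS₀.image _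
      have hTne : T.Nonempty := hS₀c.image _
      have hvS : v ∉ S := by
        rintro ⟨x, _, hx⟩; exact x.2 hx
      have hvT : v ∉ T := by
        rintro ⟨x, _, hx⟩; exact x.2 hx
      have hdisj : ∀ x, x ∈ S → x ∉ T := by
        rintro x ⟨y, hy, rfl⟩ ⟨z, hz, hzy⟩
        have : z = y := Subtype.ext hzy
        exact hz (this ▸ hy)
      have hcover : ∀ x : V, x = v ∨ x ∈ S ∨ x ∈ T := by
        intro x
        by_cases hx : x = v
        · exact Or.inl hx
        · rcases Classical.em (⟨x, hx⟩ ∈ S₀) with h | h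
          · exact Or.inr (Or.inl ⟨⟨x, hx⟩, h, rfl⟩)
          · exact Or.inr (Or.inr ⟨⟨x, hx⟩, h, rfl⟩)
      rcases hcase with hcase | hcase
      · refine claimC hG v S T hSne hTne hvS hvT hdisj hcover ?_
        rintro i ⟨y, hy, rfl⟩ j ⟨z, hz, rfl⟩ hadj
        exact hcase y hy z hz hadj
      · refine goodSplit_compl (claimC (noP4_compl hG) v S T hSne hTne hvS hvT hdisj hcover ?_)
        rintro i ⟨y, hy, rfl⟩ j ⟨z, hz, rfl⟩ hadj
        exact ((SimpleGraph.compl_adj G _ _).mp hadj).2 (hcase y hy z hz)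

lemma lintegral_of_noP4 : ∀ n : ℕ, ∀ (V : Type*) (_ : Fintype V) (_ : DecidableEq V)
    (G : SimpleGraph V) (_ : DecidableRel G.Adj), Fintype.card V = n → NoP4 G →
    ∀ μ ∈ spectrum ℝ (G.lapMatrix ℝ), ∃ z : ℤ, μ = (z : ℝ) := by
  intro n
  induction n using Nat.strong_induction_on with
  | _ n IH =>
    intro V _ _ G _ hcard hG μ hμ
    obtain ⟨f, hf0, hf⟩ := mem_spectrum_iff_exists.mp hμ
    obtain ⟨i0, hi0'⟩ := Function.ne_iff.mp hf0
    have hi0 : f i0 ≠ 0 := hi0'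
    rcases Nat.lt_or_ge n 2 with h2 | h2
    · refine ⟨0, ?_⟩
      have hsub : Subsingleton V := by
        apply Fintype.card_le_one_iff_subsingleton.mp
        omega
      have h1 : (G.lapMatrix ℝ *ᵥ f) i0 = 0 := by
        rw [lap_mulVec]
        apply Finset.sum_eq_zero
        intro j _
        have : j = i0 := Subsingleton.elim _ _
        subst this
        simp [G.irrefl]
      rw [hf] at h1
      simp only [Pi.smul_apply, smul_eq_mul] at h1
      rcases mul_eq_zero.mp h1 with h | h
      · simpa using h
      · exact absurd h hi0
    · obtain ⟨S, hSne, hScne, hsplit⟩ :=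
        goodSplit_of_noP4 n V ‹_› ‹_› G hcard h2 hG
      classical
      obtain ⟨w, hw⟩ := hScne
      obtain ⟨w', hw'⟩ := hSne
      have hwS : w ∉ S := hw
      have hw'Sc : w' ∉ Sᶜ := fun h => h hw'
      have hcS : Fintype.card ↥S < n := by
        rw [← hcard]; exact Fintype.card_subtype_lt (x := w) hwS
      have hcSc : Fintype.card ↥(Sᶜ) < n := by
        rw [← hcard]; exact Fintype.card_subtype_lt (x := w') hw'Sc
      rcases hsplit with hsplit | hsplit
      · have hcross : ∀ i ∈ S, ∀ j ∉ S, ¬ G.Adj i j := fun i hi j hj => hsplit i hi j hj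
        have hcross' : ∀ i ∈ Sᶜ, ∀ j ∉ Sᶜ, ¬ G.Adj i j := by
          intro i hi j hj hadj
          exact hsplit j (Set.not_notMem.mp hj) i hi hadj.symm
        by_cases hi0S : i0 ∈ S
        · exact IH (Fintype.card ↥S) hcS ↥S _ _ _ _ rfl (noP4_induce hG S) μ
            (spectrum_induce G S hcross hf hi0S hi0)
        · exact IH (Fintype.card ↥(Sᶜ)) hcSc ↥(Sᶜ) _ _ _ _ rfl (noP4_induce hG Sᶜ) μ
            (spectrum_induce G Sᶜ hcross' hf hi0S hi0)
      · by_cases h0 : μ = 0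
        · exact ⟨0, by simp [h0]⟩
        · have hν := compl_spectrum G hf hf0 h0
          obtain ⟨g, hg0, hg⟩ := mem_spectrum_iff_exists.mp hν
          obtain ⟨j0, hj0'⟩ := Function.ne_iff.mp hg0
          have hj0 : g j0 ≠ 0 := hj0'
          have hcross : ∀ i ∈ S, ∀ j ∉ S, ¬ Gᶜ.Adj i j := by
            intro i hi j hj hadj
            exact ((SimpleGraph.compl_adj G i j).mp hadj).2 (hsplit i hi j hj)
          have hcross' : ∀ i ∈ Sᶜ, ∀ j ∉ Sᶜ, ¬ Gᶜ.Adj i j := by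
            intro i hi j hj hadj
            exact ((SimpleGraph.compl_adj G i j).mp hadj).2
              (hsplit j (Set.not_notMem.mp hj) i hi).symm
          have key : ∃ z : ℤ, (Fintype.card V : ℝ) - μ = (z : ℝ) := by
            by_cases hj0S : j0 ∈ S
            · exact IH (Fintype.card ↥S) hcS ↥S _ _ _ _ rfl
                (noP4_induce (noP4_compl hG) S) _ (spectrum_induce Gᶜ S hcross hg hj0S hj0)
            · exact IH (Fintype.card ↥(Sᶜ)) hcSc ↥(Sᶜ) _ _ _ _ rfl
                (noP4_induce (noP4_compl hG) Sᶜ) _ (spectrum_induce Gᶜ Sᶜ hcross' hg hj0S hj0)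
          obtain ⟨z, hz⟩ := key
          refine ⟨(Fintype.card V : ℤ) - z, ?_⟩
          push_cast
          linarith

lemma inducesP4_of_pat {V : Type*} [DecidableEq V] {G : SimpleGraph V} {a b c d : V}
    (h : P4pat G a b c d) : InducesP4 G ({a, b, c, d} : Finset V) := by
  have hcoe : ((({a, b, c, d} : Finset V) : Set V)) = ({a, b, c, d} : Set V) := by
    simp
  unfold InducesP4
  rw [hcoe]
  exact iso_of_pat h

lemma not_lintegral_of_pat {V : Type*} [Fintype V] [DecidableEq V] (G : SimpleGraph V)
    [DecidableRel G.Adj] (hs : P4Sparse G) {a b c d : V} (hpat : P4pat G a b c d) :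
    ¬ LIntegral G := by
  obtain ⟨hac, had, hbd, hab, hbc, hcd, nac, nad, nbd⟩ := hpat
  have hab' : a ≠ b := hab.ne
  have hbc' : b ≠ c := hbc.ne
  have hcd' : c ≠ d := hcd.ne
  set W : Finset V := {a, b, c, d} with hW
  have hcardW : W.card = 4 := by
    rw [hW, Finset.card_insert_of_notMem (by simp [hab', hac, had]),
      Finset.card_insert_of_notMem (by simp [hbc', hbd]),
      Finset.card_insert_of_notMem (by simp [hcd']), Finset.card_singleton]
  have hWP4 : InducesP4 G W := inducesP4_of_pat ⟨hac, had, hbd, hab, hbc, hcd, nac, nad, nbd⟩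
  -- membership facts
  have maW : a ∈ W := by simp [hW]
  have mbW : b ∈ W := by simp [hW]
  have mcW : c ∈ W := by simp [hW]
  have mdW : d ∈ W := by simp [hW]
  -- classification of external vertices
  have class' : ∀ u : V, u ∉ W →
      (¬G.Adj a u ∧ ¬G.Adj b u ∧ ¬G.Adj c u ∧ ¬G.Adj d u) ∨
      (¬G.Adj a u ∧ G.Adj b u ∧ G.Adj c u ∧ ¬G.Adj d u) ∨
      (G.Adj a u ∧ G.Adj b u ∧ G.Adj c u ∧ G.Adj d u) := by
    intro v hv
    have hva : v ≠ a := fun h => hv (h ▸ maW)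
    have hvb : v ≠ b := fun h => hv (h ▸ mbW)
    have hvc : v ≠ c := fun h => hv (h ▸ mcW)
    have hvd : v ≠ d := fun h => hv (h ▸ mdW)
    have card5 : (insert v W).card = 5 := by
      rw [Finset.card_insert_of_notMem hv, hcardW]
    have sparse5 : ∀ W' : Finset V, W' ⊆ insert v W → W'.card = 4 → InducesP4 G W' →
        W' = W := by
      intro W' h1 h2 h3
      exact hs (insert v W) card5 ⟨h1, h2, h3⟩ ⟨Finset.subset_insert v W, hcardW, hWP4⟩
    have useP4 : ∀ p1 p2 p3 p4 : V, P4pat G p1 p2 p3 p4 → p1 ∈ insert v W →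
        p2 ∈ insert v W → p3 ∈ insert v W → p4 ∈ insert v W →
        v ∈ ({p1, p2, p3, p4} : Finset V) → False := by
      rintro p1 p2 p3 p4 ⟨q13, q14, q24, e12, e23, e34, n13, n14, n24⟩ h1 h2 h3 h4 hvmem
      have q12 : p1 ≠ p2 := e12.ne
      have q23 : p2 ≠ p3 := e23.ne
      have q34 : p3 ≠ p4 := e34.ne
      have hcard' : ({p1, p2, p3, p4} : Finset V).card = 4 := by
        rw [Finset.card_insert_of_notMem (by simp [q12, q13, q14]),
          Finset.card_insert_of_notMem (by simp [q23, q24]),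
          Finset.card_insert_of_notMem (by simp [q34]), Finset.card_singleton]
      have hsub : ({p1, p2, p3, p4} : Finset V) ⊆ insert v W := by
        intro x hx
        simp only [Finset.mem_insert, Finset.mem_singleton] at hx
        rcases hx with rfl | rfl | rfl | rfl <;> assumption
      have := sparse5 _ hsub hcard'
        (inducesP4_of_pat ⟨q13, q14, q24, e12, e23, e34, n13, n14, n24⟩)
      rw [this] at hvmem
      exact hv hvmem
    -- symmetric adjacency shorthands
    have mvI : v ∈ insert v W := Finset.mem_insert_self v W
    have maI : a ∈ insert v W := Finset.mem_insert_of_mem maW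
    have mbI : b ∈ insert v W := Finset.mem_insert_of_mem mbW
    have mcI : c ∈ insert v W := Finset.mem_insert_of_mem mcW
    have mdI : d ∈ insert v W := Finset.mem_insert_of_mem mdW
    by_cases pa : G.Adj a v <;> by_cases pb : G.Adj b v <;>
      by_cases pc : G.Adj c v <;> by_cases pd : G.Adj d v
    · exact Or.inr (Or.inr ⟨pa, pb, pc, pd⟩)
    · -- (T,T,T,F) : a-v-c-d
      exact absurd (useP4 a v c d ⟨hac, had, hvd, pa, pc.symm, hcd, nac, nad,
        fun h => pd h.symm⟩ maI mvI mcI mdI (by simp)) (fun h => h)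
    · -- (T,T,F,T) : c-d-v-a
      exact absurd (useP4 c d v a ⟨hvc.symm, fun h => hac h.symm, had.symm, hcd, pd, pa.symm,
        pc, fun h => nac h.symm, fun h => nad h.symm⟩ mcI mdI mvI maI (by simp)) (fun h => h)
    · -- (T,T,F,F) : v-b-c-d  (adj v b, nonadj v c, v d, b d)
      exact absurd (useP4 v b c d ⟨hvc, hvd, hbd, pb.symm, hbc, hcd, fun h => pc h.symm,
        fun h => pd h.symm, nbd⟩ mvI mbI mcI mdI (by simp)) (fun h => h)
    · -- (T,F,T,T) : b-a-v-d
      exact absurd (useP4 b a v d ⟨hvb.symm, hbd, had, hab.symm, pa, pd.symm,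
        pb, nbd, nad⟩ mbI maI mvI mdI (by simp)) (fun h => h)
    · -- (T,F,T,F) : a-v-c-d
      exact absurd (useP4 a v c d ⟨hac, had, hvd, pa, pc.symm, hcd, nac, nad,
        fun h => pd h.symm⟩ maI mvI mcI mdI (by simp)) (fun h => h)
    · -- (T,F,F,T) : v-a-b-c
      exact absurd (useP4 v a b c ⟨hvb, hvc, hac, pa.symm, hab, hbc,
        fun h => pb h.symm, fun h => pc h.symm, nac⟩ mvI maI mbI mcI (by simp)) (fun h => h)
    · -- (T,F,F,F) : v-a-b-c
      exact absurd (useP4 v a b c ⟨hvb, hvc, hac, pa.symm, hab, hbc,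
        fun h => pb h.symm, fun h => pc h.symm, nac⟩ mvI maI mbI mcI (by simp)) (fun h => h)
    · -- (F,T,T,T) : d-v-b-a
      exact absurd (useP4 d v b a ⟨hbd.symm, had.symm, hva, pd, pb.symm, hab.symm,
        fun h => nbd h.symm, fun h => nad h.symm, fun h => pa h.symm⟩ mdI mvI mbI maI
        (by simp)) (fun h => h)
    · -- (F,T,T,F) : allowed (b,c pattern)
      exact Or.inr (Or.inl ⟨pa, pb, pc, pd⟩)
    · -- (F,T,F,T) : a-b-v-d
      exact absurd (useP4 a b v d ⟨hva.symm, had, hbd, hab, pb, pd.symm,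
        pa, nad, nbd⟩ maI mbI mvI mdI (by simp)) (fun h => h)
    · -- (F,T,F,F) : v-b-c-d
      exact absurd (useP4 v b c d ⟨hvc, hvd, hbd, pb.symm, hbc, hcd, fun h => pc h.symm,
        fun h => pd h.symm, nbd⟩ mvI mbI mcI mdI (by simp)) (fun h => h)
    · -- (F,F,T,T) : v-c-b-a
      exact absurd (useP4 v c b a ⟨hvb, hva, hac.symm, pc.symm, hbc.symm, hab.symm,
        fun h => pb h.symm, fun h => pa h.symm, fun h => nac h.symm⟩ mvI mcI mbI maI
        (by simp)) (fun h => h)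
    · -- (F,F,T,F) : v-c-b-a
      exact absurd (useP4 v c b a ⟨hvb, hva, hac.symm, pc.symm, hbc.symm, hab.symm,
        fun h => pb h.symm, fun h => pa h.symm, fun h => nac h.symm⟩ mvI mcI mbI maI
        (by simp)) (fun h => h)
    · -- (F,F,F,T) : v-d-c-b
      exact absurd (useP4 v d c b ⟨hvc, hvb, hbd.symm, pd.symm, hcd.symm, hbc.symm,
        fun h => pc h.symm, fun h => pb h.symm, fun h => nbd h.symm⟩ mvI mdI mcI mbI
        (by simp)) (fun h => h)
    · exact Or.inl ⟨pa, pb, pc, pd⟩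
  -- counting external neighbours
  set kA := (univ.filter (fun u => u ∉ W ∧ G.Adj a u)).card with hkA
  set kB := (univ.filter (fun u => u ∉ W ∧ G.Adj b u)).card with hkB
  set kC := (univ.filter (fun u => u ∉ W ∧ G.Adj c u)).card with hkC
  set kD := (univ.filter (fun u => u ∉ W ∧ G.Adj d u)).card with hkD
  have hkAD : kA = kD := by
    rw [hkA, hkD]
    congr 1
    ext u
    simp only [Finset.mem_filter, Finset.mem_univ, true_and]
    constructor
    · rintro ⟨h1, h2⟩
      refine ⟨h1, ?_⟩
      rcases class' u h1 with ⟨h, _, _, _⟩ | ⟨h, _, _, _⟩ | ⟨_, _, _, h⟩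
      · exact absurd h2 h
      · exact absurd h2 h
      · exact h
    · rintro ⟨h1, h2⟩
      refine ⟨h1, ?_⟩
      rcases class' u h1 with ⟨_, _, _, h⟩ | ⟨_, _, _, h⟩ | ⟨h, _, _, _⟩
      · exact absurd h2 h
      · exact absurd h2 h
      · exact h
  have hkBC : kB = kC := by
    rw [hkB, hkC]
    congr 1
    ext u
    simp only [Finset.mem_filter, Finset.mem_univ, true_and]
    constructor
    · rintro ⟨h1, h2⟩
      refine ⟨h1, ?_⟩
      rcases class' u h1 with ⟨_, h, _, _⟩ | ⟨_, _, h, _⟩ | ⟨_, _, h, _⟩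
      · exact absurd h2 h
      · exact h
      · exact h
    · rintro ⟨h1, h2⟩
      refine ⟨h1, ?_⟩
      rcases class' u h1 with ⟨_, _, h, _⟩ | ⟨_, h, _, _⟩ | ⟨_, h, _, _⟩
      · exact absurd h2 h
      · exact h
      · exact h
  have hkAB : kA ≤ kB := by
    apply Finset.card_le_card
    intro u hu
    simp only [Finset.mem_filter, Finset.mem_univ, true_and] at hu ⊢
    obtain ⟨h1, h2⟩ := hu
    refine ⟨h1, ?_⟩
    rcases class' u h1 with ⟨h, _, _, _⟩ | ⟨h, _, _, _⟩ | ⟨_, h, _, _⟩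
    · exact absurd h2 h
    · exact absurd h2 h
    · exact h
  obtain ⟨m, hm⟩ : ∃ m : ℕ, kB = kA + m := ⟨kB - kA, by omega⟩
  obtain ⟨t, ht⟩ : ∃ t : ℝ, t^2 + (2+(m:ℝ))*t - 1 = 0 := by
    refine ⟨(-(2+(m:ℝ)) + Real.sqrt ((2+(m:ℝ))^2+4))/2, ?_⟩
    have hsq : Real.sqrt ((2+(m:ℝ))^2+4)^2 = (2+(m:ℝ))^2+4 := Real.sq_sqrt (by positivity)
    linear_combination hsq/4
  set f : V → ℝ := fun x => if x = a then 1 else if x = b then t else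
    if x = c then -t else if x = d then -1 else 0 with hfdef
  have hfa : f a = 1 := by simp [hfdef]
  have hfb : f b = t := by simp [hfdef, Ne.symm hab']
  have hfc : f c = -t := by simp [hfdef, Ne.symm hac, Ne.symm hbc']
  have hfd : f d = -1 := by simp [hfdef, Ne.symm had, Ne.symm hbd, Ne.symm hcd']
  have hfout : ∀ u, u ∉ W → f u = 0 := by
    intro u hu
    have h1 : u ≠ a := fun h => hu (h ▸ maW)
    have h2 : u ≠ b := fun h => hu (h ▸ mbW)
    have h3 : u ≠ c := fun h => hu (h ▸ mcW)
    have h4 : u ≠ d := fun h => hu (h ▸ mdW)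
    simp [hfdef, h1, h2, h3, h4]
  have rowsplit : ∀ i : V, (G.lapMatrix ℝ *ᵥ f) i =
      (∑ j ∈ univ \ W, (if G.Adj i j then f i - f j else 0)) +
      ((if G.Adj i a then f i - f a else 0) + ((if G.Adj i b then f i - f b else 0) +
       ((if G.Adj i c then f i - f c else 0) + (if G.Adj i d then f i - f d else 0)))) := by
    intro i
    rw [lap_mulVec, ← Finset.sum_sdiff (Finset.subset_univ W)]
    congr 1
    rw [show W = insert a (insert b (insert c ({d} : Finset V))) from rfl,
      Finset.sum_insert (by simp [hab', hac, had]), Finset.sum_insert (by simp [hbc', hbd]),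
      Finset.sum_insert (by simp [hcd']), Finset.sum_singleton]
  have extrow : ∀ i : V, (∑ j ∈ univ \ W, (if G.Adj i j then f i - f j else 0)) =
      ((univ.filter (fun u => u ∉ W ∧ G.Adj i u)).card : ℝ) * f i := by
    intro i
    have h1 : ∀ j ∈ univ \ W, (if G.Adj i j then f i - f j else 0)
        = (if G.Adj i j then f i else 0) := by
      intro j hj
      by_cases h : G.Adj i j
      · simp [h, hfout j (Finset.mem_sdiff.mp hj).2]
      · simp [h]
    rw [Finset.sum_congr rfl h1, Finset.sum_ite, Finset.sum_const, Finset.sum_const_zero,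
      add_zero, nsmul_eq_mul]
    have h2 : (univ \ W).filter (fun j => G.Adj i j)
        = univ.filter (fun u => u ∉ W ∧ G.Adj i u) := by
      ext u
      simp only [Finset.mem_filter, Finset.mem_sdiff, Finset.mem_univ, true_and]
    rw [h2]
  have hkBr : (kB : ℝ) = (kA : ℝ) + (m : ℝ) := by rw [hm]; push_cast; ring
  have hkCr : (kC : ℝ) = (kA : ℝ) + (m : ℝ) := by rw [← hkBC]; exact hkBr
  have hkDr : (kD : ℝ) = (kA : ℝ) := by rw [← hkAD]
  have heig : G.lapMatrix ℝ *ᵥ f = ((1 + (kA:ℝ)) - t) • f := by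
    funext i
    simp only [Pi.smul_apply, smul_eq_mul]
    by_cases hia : i = a
    · rw [hia, rowsplit a, extrow a, ← hkA, if_neg (G.irrefl), if_pos hab, if_neg nac,
        if_neg nad, hfa, hfb]
      ring
    by_cases hib : i = b
    · rw [hib, rowsplit b, extrow b, ← hkB, if_pos hab.symm, if_neg (G.irrefl), if_pos hbc,
        if_neg nbd, hfa, hfb, hfc, hkBr]
      linear_combination ht
    by_cases hic : i = c
    · rw [hic, rowsplit c, extrow c, ← hkC, if_neg (fun h => nac (G.adj_symm h)),
        if_pos hbc.symm, if_neg (G.irrefl), if_pos hcd, hfb, hfc, hfd, hkCr]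
      linear_combination -ht
    by_cases hid : i = d
    · rw [hid, rowsplit d, extrow d, ← hkD, if_neg (fun h => nad (G.adj_symm h)),
        if_neg (fun h => nbd (G.adj_symm h)), if_pos hcd.symm, if_neg (G.irrefl), hfc, hfd, hkDr]
      ring
    · have hiW : i ∉ W := by
        simp only [hW, Finset.mem_insert, Finset.mem_singleton]
        push_neg
        exact ⟨hia, hib, hic, hid⟩
      rw [rowsplit i, extrow i, hfout i hiW]
      rcases class' i hiW with ⟨h1, h2, h3, h4⟩ | ⟨h1, h2, h3, h4⟩ | ⟨h1, h2, h3, h4⟩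
      · rw [if_neg (fun h => h1 (G.adj_symm h)), if_neg (fun h => h2 (G.adj_symm h)),
          if_neg (fun h => h3 (G.adj_symm h)), if_neg (fun h => h4 (G.adj_symm h))]
        ring
      · rw [if_neg (fun h => h1 (G.adj_symm h)), if_pos (G.adj_symm h2), if_pos (G.adj_symm h3),
          if_neg (fun h => h4 (G.adj_symm h)), hfb, hfc]
        ring
      · rw [if_pos (G.adj_symm h1), if_pos (G.adj_symm h2), if_pos (G.adj_symm h3), if_pos (G.adj_symm h4),
          hfa, hfb, hfc, hfd]
        ring
  have hfne : f ≠ 0 := by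
    intro h
    have h0 := congrFun h a
    rw [hfa] at h0
    exact one_ne_zero h0
  have hlam : ((1 + (kA:ℝ)) - t) ∈ spectrum ℝ (G.lapMatrix ℝ) :=
    mem_spectrum_iff_exists.mpr ⟨f, hfne, heig⟩
  intro hL
  obtain ⟨z, hz⟩ := hL _ hlam
  set T : ℤ := 1 + (kA : ℤ) - z with hT
  have htT : t = (T : ℝ) := by
    push_cast [hT]
    linarith
  have hTint : T^2 + (2 + (m:ℤ))*T - 1 = 0 := by
    have h1 := ht
    rw [htT] at h1
    exact_mod_cast h1
  have hdvd : T ∣ 1 := ⟨T + (2 + m), by linear_combination -hTint⟩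
  have hmnn : (0:ℤ) ≤ (m:ℤ) := Int.natCast_nonneg m
  rcases Int.isUnit_iff.mp (isUnit_of_dvd_one hdvd) with h1 | h1 <;> rw [h1] at hTint
  · have : (2:ℤ) + m = 0 := by linear_combination hTint
    linarith
  · have : (2:ℤ) + m = 0 := by linear_combination -hTint
    linarith

end Aux


/-- A `P₄`-reducible graph (one that is both `P₄`-sparse and `P₄`-extendible) is
`L`-integral if and only if it is a cograph. -/
theorem P4Reducible_LIntegral_iff_isCograph {V : Type*} [Fintype V] [DecidableEq V]
    (G : SimpleGraph V) [DecidableRel G.Adj] (hs : P4Sparse G) (he : P4Extendible G) :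
    LIntegral G ↔ IsCograph G := by
  constructor
  · intro hL s
    rintro hiso
    obtain ⟨a, b, c, d, hpat⟩ := exists_pat_of_iso hiso
    exact absurd hL (not_lintegral_of_pat G hs hpat)
  · intro hc
    have hG : NoP4 G := fun a b c d hpat => hc _ (iso_of_pat hpat)
    exact lintegral_of_noP4 (Fintype.card V) V _ _ G _ rfl hG
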